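/- (Small data coercivity, case κ < 1 with K₃ ≤ K₁.) Let Ω ⊆ ℝ³ be open and bounded, let K₁ ≥ K₃ > 0, and suppose C > 0 is such that every smooth compactly supported vector field v with support in Ω satisfies ∫_Ω |v|² ≤ C(∫_Ω (∇·v)² + ∫_Ω |∇×v|²). Let n_k : ℝ³ → ℝ³ be continuously differentiable with |n_k(x)|² ≤ β (β ≥ 1) and |∇×n_k(x)|² ≤ C_sup for all x ∈ Ω with C_sup > 0, and let λ_k : Ω → ℝ be measurable with λ_k ≥ 0 a.e. on Ω. Set α₄ = K₃(4√(β C_sup) + C_sup). If K₂ = (1−ε₂)K₃ with 0 < ε₂ < min(K₃/(K₃β + α₄(C+1)), 1/β), then for every smooth compactly supported v with support in Ω, a(v, v) ≥ ((1−ε₂β)K₃/(C+1) − ε₂α₄) ‖v‖_DC², and (1−ε₂β)K₃/(C+1) − ε₂α₄ > 0. -/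

import Mathlib

open MeasureTheory Matrix

/-- The matrix `Z(n) = I - (1-κ) n nᵀ`. -/
noncomputable def Zmat (κ : ℝ) (n : Fin 3 → ℝ) : Matrix (Fin 3) (Fin 3) ℝ :=
  1 - (1 - κ) • Matrix.vecMulVec n n

/-- Partial derivative of a scalar field on `ℝ³` in the `i`-th coordinate direction. -/
noncomputable def pd (f : (Fin 3 → ℝ) → ℝ) (i : Fin 3) (x : Fin 3 → ℝ) : ℝ :=
  fderiv ℝ f x (Pi.single i 1)

/-- Divergence of a vector field on `ℝ³`. -/
noncomputable def vdiv (v : (Fin 3 → ℝ) → (Fin 3 → ℝ)) (x : Fin 3 → ℝ) : ℝ :=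
  ∑ i, pd (fun y => v y i) i x

/-- Curl of a vector field on `ℝ³`. -/
noncomputable def vcurl (v : (Fin 3 → ℝ) → (Fin 3 → ℝ)) (x : Fin 3 → ℝ) : Fin 3 → ℝ :=
  ![pd (fun y => v y 2) 1 x - pd (fun y => v y 1) 2 x,
    pd (fun y => v y 0) 2 x - pd (fun y => v y 2) 0 x,
    pd (fun y => v y 1) 0 x - pd (fun y => v y 0) 1 x]

/-- Squared `H(div) ∩ H(curl)` norm over `Ω`:
`‖v‖_DC² = ∫_Ω |v|² + ∫_Ω (∇·v)² + ∫_Ω |∇×v|²`. -/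
noncomputable def DCsq (Ω : Set (Fin 3 → ℝ)) (v : (Fin 3 → ℝ) → (Fin 3 → ℝ)) : ℝ :=
  (∫ x in Ω, v x ⬝ᵥ v x) + (∫ x in Ω, (vdiv v x) ^ 2) +
    (∫ x in Ω, vcurl v x ⬝ᵥ vcurl v x)

/-- The linearized bilinear form `a(u,v)` of the Newton iteration, with `κ = K₂/K₃`. -/
noncomputable def aform (Ω : Set (Fin 3 → ℝ)) (K₁ K₂ K₃ : ℝ)
    (nk : (Fin 3 → ℝ) → (Fin 3 → ℝ)) (lam : (Fin 3 → ℝ) → ℝ)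
    (u v : (Fin 3 → ℝ) → (Fin 3 → ℝ)) : ℝ :=
  K₁ * (∫ x in Ω, vdiv u x * vdiv v x)
    + K₃ * (∫ x in Ω, ((Zmat (K₂ / K₃) (nk x)) *ᵥ vcurl u x) ⬝ᵥ vcurl v x)
    + (K₂ - K₃) *
        ((∫ x in Ω, (u x ⬝ᵥ vcurl v x) * (nk x ⬝ᵥ vcurl nk x))
          + (∫ x in Ω, (nk x ⬝ᵥ vcurl v x) * (u x ⬝ᵥ vcurl nk x))
          + (∫ x in Ω, (nk x ⬝ᵥ vcurl nk x) * (v x ⬝ᵥ vcurl u x))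
          + (∫ x in Ω, (nk x ⬝ᵥ vcurl u x) * (v x ⬝ᵥ vcurl nk x))
          + (∫ x in Ω, (u x ⬝ᵥ vcurl nk x) * (v x ⬝ᵥ vcurl nk x)))
    + ∫ x in Ω, lam x * (u x ⬝ᵥ v x)

lemma Zmat_apply' (κ : ℝ) (n c : Fin 3 → ℝ) :
    (Zmat κ n *ᵥ c) ⬝ᵥ c = c ⬝ᵥ c - (1 - κ) * (n ⬝ᵥ c)^2 := by
  simp [Zmat, dotProduct, Matrix.mulVec, Matrix.vecMulVec, Fin.sum_univ_three,
    Matrix.sub_apply, Matrix.one_apply, Matrix.smul_apply]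
  ring

lemma dot_self_nonneg' (a : Fin 3 → ℝ) : 0 ≤ a ⬝ᵥ a := by
  simp only [dotProduct, Fin.sum_univ_three]
  nlinarith [mul_self_nonneg (a 0), mul_self_nonneg (a 1), mul_self_nonneg (a 2)]

lemma cauchy3 (a b : Fin 3 → ℝ) : (a ⬝ᵥ b)^2 ≤ (a ⬝ᵥ a) * (b ⬝ᵥ b) := by
  simp only [dotProduct, Fin.sum_univ_three]
  nlinarith [sq_nonneg (a 0 * b 1 - a 1 * b 0), sq_nonneg (a 0 * b 2 - a 2 * b 0),
    sq_nonneg (a 1 * b 2 - a 2 * b 1)]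

lemma cross_bound' {p q s X Y : ℝ} (hX : 0 ≤ X) (hY : 0 ≤ Y) (hs : 0 ≤ s)
    (h : (p*q)^2 ≤ s^2*(X*Y)) : 2*(p*q) ≤ s*(X+Y) := by
  nlinarith [sq_nonneg (X-Y), mul_nonneg hs (add_nonneg hX hY),
    sq_nonneg (s*(X+Y) - 2*(p*q)), sq_nonneg (s*(X+Y) + 2*(p*q))]

lemma pointwise_bound' (K₃ ε₂ β Csup : ℝ) (hK₃ : 0 < K₃) (hε₂ : 0 ≤ ε₂) (hCsup : 0 ≤ Csup)
    (hβ : 0 ≤ β) (a n m c : Fin 3 → ℝ)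
    (hn : n ⬝ᵥ n ≤ β) (hm : m ⬝ᵥ m ≤ Csup) :
    (1 - ε₂*β) * K₃ * (c ⬝ᵥ c) - ε₂ * (K₃ * (4 * Real.sqrt (β*Csup) + Csup)) * (a ⬝ᵥ a + c ⬝ᵥ c)
      ≤ K₃ * ((Zmat (1-ε₂) n *ᵥ c) ⬝ᵥ c)
        + (-(ε₂*K₃)) * ((a ⬝ᵥ c)*(n ⬝ᵥ m) + (n ⬝ᵥ c)*(a ⬝ᵥ m) + (n ⬝ᵥ m)*(a ⬝ᵥ c)
            + (n ⬝ᵥ c)*(a ⬝ᵥ m) + (a ⬝ᵥ m)*(a ⬝ᵥ m)) := by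
  rw [Zmat_apply']
  set s := Real.sqrt (β*Csup) with hsdef
  have hs0 : 0 ≤ s := Real.sqrt_nonneg _
  have hs2 : s^2 = β*Csup := Real.sq_sqrt (mul_nonneg hβ hCsup)
  have hX : 0 ≤ a ⬝ᵥ a := dot_self_nonneg' a
  have hY : 0 ≤ c ⬝ᵥ c := dot_self_nonneg' c
  have hnc : (n ⬝ᵥ c)^2 ≤ β * (c ⬝ᵥ c) :=
    le_trans (cauchy3 n c) (mul_le_mul_of_nonneg_right hn hY)
  have ham : (a ⬝ᵥ m)^2 ≤ Csup * (a ⬝ᵥ a) := by nlinarith [cauchy3 a m]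
  have hac : (a ⬝ᵥ c)^2 ≤ (a ⬝ᵥ a) * (c ⬝ᵥ c) := cauchy3 a c
  have hnm : (n ⬝ᵥ m)^2 ≤ β * Csup :=
    le_trans (cauchy3 n m) (by nlinarith [dot_self_nonneg' m])
  have h1 : 2*((a ⬝ᵥ c)*(n ⬝ᵥ m)) ≤ s*(a ⬝ᵥ a + c ⬝ᵥ c) :=
    cross_bound' hX hY hs0 (by rw [mul_pow, hs2]; exact le_trans (mul_le_mul hac hnm (sq_nonneg _) (mul_nonneg hX hY)) (by ring_nf; exact le_refl _))
  have h2 : 2*((n ⬝ᵥ c)*(a ⬝ᵥ m)) ≤ s*(a ⬝ᵥ a + c ⬝ᵥ c) :=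
    cross_bound' hX hY hs0 (by rw [mul_pow, hs2]; exact le_trans (mul_le_mul hnc ham (sq_nonneg _) (by positivity)) (by ring_nf; exact le_refl _))
  have hεK : (0:ℝ) ≤ ε₂ * K₃ := mul_nonneg hε₂ hK₃.le
  have hsum : 2*((a ⬝ᵥ c)*(n ⬝ᵥ m)) + 2*((n ⬝ᵥ c)*(a ⬝ᵥ m)) + (a ⬝ᵥ m)*(a ⬝ᵥ m) + (n ⬝ᵥ c)^2
      ≤ (4*s+Csup)*(a ⬝ᵥ a + c ⬝ᵥ c) + β*(c ⬝ᵥ c) := by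
    nlinarith [mul_nonneg hCsup hY, mul_nonneg hs0 hX, mul_nonneg hs0 hY, sq_nonneg (a ⬝ᵥ m)]
  have hfin := mul_le_mul_of_nonneg_left hsum hεK
  nlinarith [hfin]

lemma pd_cont' {f : (Fin 3 → ℝ) → ℝ} (hf : ContDiff ℝ 1 f) (i : Fin 3) :
    Continuous (pd f i) := by
  show Continuous fun x => fderiv ℝ f x (Pi.single i 1)
  exact (ContinuousLinearMap.apply ℝ ℝ (Pi.single i (1:ℝ))).continuous.comp
    (hf.continuous_fderiv one_ne_zero)

lemma pd_supp' {f : (Fin 3 → ℝ) → ℝ} (hf : HasCompactSupport f) (i : Fin 3) :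
    HasCompactSupport (pd f i) := hf.fderiv_apply ℝ (Pi.single i 1)

lemma vcurl_eq' (v : (Fin 3 → ℝ) → (Fin 3 → ℝ)) :
    (fun x => vcurl v x 0) = (fun x => pd (fun y => v y 2) 1 x - pd (fun y => v y 1) 2 x)
    ∧ (fun x => vcurl v x 1) = (fun x => pd (fun y => v y 0) 2 x - pd (fun y => v y 2) 0 x)
    ∧ (fun x => vcurl v x 2) = (fun x => pd (fun y => v y 1) 0 x - pd (fun y => v y 0) 1 x) :=
  ⟨rfl, rfl, rfl⟩

lemma vcurl_cont' {v : (Fin 3 → ℝ) → (Fin 3 → ℝ)} (hv : ContDiff ℝ 1 v) (i : Fin 3) :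
    Continuous fun x => vcurl v x i := by
  have h : ∀ j k : Fin 3, Continuous (pd (fun y => v y j) k) :=
    fun j k => pd_cont' (contDiff_pi.mp hv j) k
  have h0 : Continuous fun x => vcurl v x 0 := (vcurl_eq' v).1 ▸ ((h 2 1).sub (h 1 2))
  have h1 : Continuous fun x => vcurl v x 1 := (vcurl_eq' v).2.1 ▸ ((h 0 2).sub (h 2 0))
  have h2 : Continuous fun x => vcurl v x 2 := (vcurl_eq' v).2.2 ▸ ((h 1 0).sub (h 0 1))
  fin_cases i
  · exact h0
  · exact h1
  · exact h2

lemma vcurl_supp' {v : (Fin 3 → ℝ) → (Fin 3 → ℝ)} (hv : HasCompactSupport v) (i : Fin 3) :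
    HasCompactSupport fun x => vcurl v x i := by
  have h : ∀ j k : Fin 3, HasCompactSupport (pd (fun y => v y j) k) := fun j k =>
    pd_supp' (hv.comp_left (g := fun w : Fin 3 → ℝ => w j) rfl) k
  have hsub : ∀ (f g : (Fin 3 → ℝ) → ℝ), HasCompactSupport f → HasCompactSupport g →
      HasCompactSupport (fun x => f x - g x) := fun f g hf hg => hf.comp₂_left hg (sub_zero 0)
  have h0 : HasCompactSupport fun x => vcurl v x 0 := (vcurl_eq' v).1 ▸ hsub _ _ (h 2 1) (h 1 2)
  have h1 : HasCompactSupport fun x => vcurl v x 1 := (vcurl_eq' v).2.1 ▸ hsub _ _ (h 0 2) (h 2 0)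
  have h2 : HasCompactSupport fun x => vcurl v x 2 := (vcurl_eq' v).2.2 ▸ hsub _ _ (h 1 0) (h 0 1)
  fin_cases i
  · exact h0
  · exact h1
  · exact h2

lemma dot_cont' {f g : (Fin 3 → ℝ) → (Fin 3 → ℝ)} (hf : ∀ i, Continuous fun x => f x i)
    (hg : ∀ i, Continuous fun x => g x i) : Continuous fun x => f x ⬝ᵥ g x := by
  simp only [dotProduct, Fin.sum_univ_three]
  exact (((hf 0).mul (hg 0)).add ((hf 1).mul (hg 1))).add ((hf 2).mul (hg 2))

lemma dot_supp_left' {f g : (Fin 3 → ℝ) → (Fin 3 → ℝ)}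
    (hf : ∀ i, HasCompactSupport fun x => f x i) :
    HasCompactSupport fun x => f x ⬝ᵥ g x := by
  have hm : ∀ i : Fin 3, HasCompactSupport fun x => f x i * g x i := fun i =>
    HasCompactSupport.mul_right (hf i)
  simp only [dotProduct, Fin.sum_univ_three]
  exact ((hm 0).add (hm 1)).add (hm 2)

lemma dot_supp_right' {f g : (Fin 3 → ℝ) → (Fin 3 → ℝ)}
    (hg : ∀ i, HasCompactSupport fun x => g x i) :
    HasCompactSupport fun x => f x ⬝ᵥ g x := by
  have hm : ∀ i : Fin 3, HasCompactSupport fun x => f x i * g x i := fun i =>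
    HasCompactSupport.mul_left (hg i)
  simp only [dotProduct, Fin.sum_univ_three]
  exact ((hm 0).add (hm 1)).add (hm 2)

set_option maxHeartbeats 2000000 in
/-- small data coercivity, `κ < 1`, `K₃ ≤ K₁`: if `K₂ = (1−ε₂)K₃` with
`0 < ε₂ < min(K₃/(K₃β + α₄(C+1)), 1/β)`, where `α₄ = K₃(4√(βC_sup)+C_sup)`, then
`a(v,v) ≥ ((1−ε₂β)K₃/(C+1) − ε₂α₄)‖v‖_DC²` and the constant is positive. -/
theorem stmt17 (Ω : Set (Fin 3 → ℝ)) (hΩo : IsOpen Ω) (hΩb : Bornology.IsBounded Ω)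
    (K₁ K₃ C : ℝ) (hK₃ : 0 < K₃) (hK₁₃ : K₃ ≤ K₁) (hC : 0 < C)
    (hPoincare : ∀ v : (Fin 3 → ℝ) → (Fin 3 → ℝ),
      ContDiff ℝ (⊤ : ℕ∞) v → HasCompactSupport v → tsupport v ⊆ Ω →
      (∫ x in Ω, v x ⬝ᵥ v x) ≤
        C * ((∫ x in Ω, (vdiv v x) ^ 2) + (∫ x in Ω, vcurl v x ⬝ᵥ vcurl v x)))
    (β Csup : ℝ) (hβ : 1 ≤ β) (hCsup : 0 < Csup)
    (nk : (Fin 3 → ℝ) → (Fin 3 → ℝ)) (hnk : ContDiff ℝ 1 nk)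
    (hnβ : ∀ x ∈ Ω, nk x ⬝ᵥ nk x ≤ β)
    (hncurl : ∀ x ∈ Ω, vcurl nk x ⬝ᵥ vcurl nk x ≤ Csup)
    (lam : (Fin 3 → ℝ) → ℝ) (hlam_meas : Measurable lam)
    (hlam : ∀ᵐ x ∂(volume.restrict Ω), 0 ≤ lam x)
    (ε₂ K₂ : ℝ) (hε₂ : 0 < ε₂)
    (hε₂' : ε₂ < min
        (K₃ / (K₃ * β + (K₃ * (4 * Real.sqrt (β * Csup) + Csup)) * (C + 1)))
        (1 / β))
    (hK₂ : K₂ = (1 - ε₂) * K₃) :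
    0 < (1 - ε₂ * β) * K₃ / (C + 1) - ε₂ * (K₃ * (4 * Real.sqrt (β * Csup) + Csup)) ∧
    ∀ v : (Fin 3 → ℝ) → (Fin 3 → ℝ),
      ContDiff ℝ (⊤ : ℕ∞) v → HasCompactSupport v → tsupport v ⊆ Ω →
      ((1 - ε₂ * β) * K₃ / (C + 1) - ε₂ * (K₃ * (4 * Real.sqrt (β * Csup) + Csup))) *
          DCsq Ω v ≤
        aform Ω K₁ K₂ K₃ nk lam v v := by
  have hβ0 : (0:ℝ) < β := lt_of_lt_of_le one_pos hβ
  have hs0 : (0:ℝ) ≤ Real.sqrt (β * Csup) := Real.sqrt_nonneg _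
  have hspos : (0:ℝ) < Real.sqrt (β * Csup) := Real.sqrt_pos.mpr (by positivity)
  have hα : (0:ℝ) < K₃ * (4 * Real.sqrt (β * Csup) + Csup) := by positivity
  have hC1 : (0:ℝ) < C + 1 := by linarith
  have hεβ1 : ε₂ * β < 1 := by
    have h := lt_of_lt_of_le hε₂' (min_le_right _ _)
    rw [lt_div_iff₀ hβ0] at h
    linarith
  have hεD : ε₂ * (K₃ * β + (K₃ * (4 * Real.sqrt (β * Csup) + Csup)) * (C + 1)) < K₃ := by
    have h := lt_of_lt_of_le hε₂' (min_le_left _ _)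
    rw [lt_div_iff₀ (by positivity)] at h
    linarith
  have hμ : 0 < (1 - ε₂ * β) * K₃ / (C + 1)
      - ε₂ * (K₃ * (4 * Real.sqrt (β * Csup) + Csup)) := by
    rw [sub_pos, lt_div_iff₀ hC1]
    nlinarith
  refine ⟨hμ, ?_⟩
  intro v hv hvs hvsub
  have hΩm : MeasurableSet Ω := hΩo.measurableSet
  have hv1 : ContDiff ℝ 1 v := hv.of_le (by simp)
  have hvci : ∀ i, Continuous fun x => v x i := fun i => (continuous_apply i).comp hv.continuous
  have hvsi : ∀ i, HasCompactSupport fun x => v x i := fun i =>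
    hvs.comp_left (g := fun w : Fin 3 → ℝ => w i) rfl
  have hcci : ∀ i, Continuous fun x => vcurl v x i := vcurl_cont' hv1
  have hcsi : ∀ i, HasCompactSupport fun x => vcurl v x i := vcurl_supp' hvs
  have hnci : ∀ i, Continuous fun x => nk x i := fun i => (continuous_apply i).comp hnk.continuous
  have hmci : ∀ i, Continuous fun x => vcurl nk x i := vcurl_cont' hnk
  have int_of : ∀ {f : (Fin 3 → ℝ) → ℝ}, Continuous f → HasCompactSupport f →
      IntegrableOn f Ω := fun hf hs => (hf.integrable_of_hasCompactSupport hs).integrableOn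
  -- scalar building blocks
  have hg1c : Continuous fun x => v x ⬝ᵥ vcurl v x := dot_cont' hvci hcci
  have hg1s : HasCompactSupport fun x => v x ⬝ᵥ vcurl v x := dot_supp_left' hvsi
  have hg2c : Continuous fun x => nk x ⬝ᵥ vcurl nk x := dot_cont' hnci hmci
  have hg3c : Continuous fun x => nk x ⬝ᵥ vcurl v x := dot_cont' hnci hcci
  have hg3s : HasCompactSupport fun x => nk x ⬝ᵥ vcurl v x := dot_supp_right' hcsi
  have hg4c : Continuous fun x => v x ⬝ᵥ vcurl nk x := dot_cont' hvci hmci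
  have hg4s : HasCompactSupport fun x => v x ⬝ᵥ vcurl nk x := dot_supp_left' hvsi
  -- integrability of all the integrands
  have iX : IntegrableOn (fun x => v x ⬝ᵥ v x) Ω :=
    int_of (dot_cont' hvci hvci) (dot_supp_left' hvsi)
  have iY : IntegrableOn (fun x => vcurl v x ⬝ᵥ vcurl v x) Ω :=
    int_of (dot_cont' hcci hcci) (dot_supp_left' hcsi)
  have it1 : IntegrableOn (fun x => (v x ⬝ᵥ vcurl v x) * (nk x ⬝ᵥ vcurl nk x)) Ω :=
    int_of (hg1c.mul hg2c) hg1s.mul_right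
  have it2 : IntegrableOn (fun x => (nk x ⬝ᵥ vcurl v x) * (v x ⬝ᵥ vcurl nk x)) Ω :=
    int_of (hg3c.mul hg4c) hg3s.mul_right
  have it3 : IntegrableOn (fun x => (nk x ⬝ᵥ vcurl nk x) * (v x ⬝ᵥ vcurl v x)) Ω :=
    int_of (hg2c.mul hg1c) hg1s.mul_left
  have it5 : IntegrableOn (fun x => (v x ⬝ᵥ vcurl nk x) * (v x ⬝ᵥ vcurl nk x)) Ω :=
    int_of (hg4c.mul hg4c) hg4s.mul_right
  have hfZeq : (fun x => (Zmat (1-ε₂) (nk x) *ᵥ vcurl v x) ⬝ᵥ vcurl v x)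
      = fun x => (vcurl v x ⬝ᵥ vcurl v x) - (1-(1-ε₂)) * (nk x ⬝ᵥ vcurl v x)^2 :=
    funext fun x => Zmat_apply' _ _ _
  have iZ : IntegrableOn (fun x => (Zmat (1-ε₂) (nk x) *ᵥ vcurl v x) ⬝ᵥ vcurl v x) Ω := by
    rw [hfZeq]
    refine iY.sub ?_
    have hsq : HasCompactSupport fun x => (nk x ⬝ᵥ vcurl v x)^2 := by
      have : (fun x => (nk x ⬝ᵥ vcurl v x)^2)
          = fun x => (nk x ⬝ᵥ vcurl v x) * (nk x ⬝ᵥ vcurl v x) := funext fun x => sq _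
      rw [this]; exact hg3s.mul_right
    exact (int_of (hg3c.pow 2) hsq).const_mul _
  -- nonnegativity of basic integrals
  have hA0 : 0 ≤ ∫ x in Ω, (vdiv v x)^2 := integral_nonneg fun x => sq_nonneg _
  have hV0 : 0 ≤ ∫ x in Ω, v x ⬝ᵥ v x := integral_nonneg fun x => dot_self_nonneg' _
  have hB0 : 0 ≤ ∫ x in Ω, vcurl v x ⬝ᵥ vcurl v x := integral_nonneg fun x => dot_self_nonneg' _
  have hPoin := hPoincare v hv hvs hvsub
  have hL : 0 ≤ ∫ x in Ω, lam x * (v x ⬝ᵥ v x) := by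
    refine integral_nonneg_of_ae ?_
    filter_upwards [hlam] with x hx
    exact mul_nonneg hx (dot_self_nonneg' _)
  have hκ : K₂ / K₃ = 1 - ε₂ := by
    rw [hK₂]; field_simp
  have hco : K₂ - K₃ = -(ε₂ * K₃) := by rw [hK₂]; ring
  -- combine the middle terms into a single integral
  have i12 : IntegrableOn (fun x => (v x ⬝ᵥ vcurl v x) * (nk x ⬝ᵥ vcurl nk x)
      + (nk x ⬝ᵥ vcurl v x) * (v x ⬝ᵥ vcurl nk x)) Ω := it1.add it2
  have i123 : IntegrableOn (fun x => (v x ⬝ᵥ vcurl v x) * (nk x ⬝ᵥ vcurl nk x)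
      + (nk x ⬝ᵥ vcurl v x) * (v x ⬝ᵥ vcurl nk x)
      + (nk x ⬝ᵥ vcurl nk x) * (v x ⬝ᵥ vcurl v x)) Ω := i12.add it3
  have i1234 : IntegrableOn (fun x => (v x ⬝ᵥ vcurl v x) * (nk x ⬝ᵥ vcurl nk x)
      + (nk x ⬝ᵥ vcurl v x) * (v x ⬝ᵥ vcurl nk x)
      + (nk x ⬝ᵥ vcurl nk x) * (v x ⬝ᵥ vcurl v x)
      + (nk x ⬝ᵥ vcurl v x) * (v x ⬝ᵥ vcurl nk x)) Ω := i123.add it2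
  have i12345 : IntegrableOn (fun x => (v x ⬝ᵥ vcurl v x) * (nk x ⬝ᵥ vcurl nk x)
      + (nk x ⬝ᵥ vcurl v x) * (v x ⬝ᵥ vcurl nk x)
      + (nk x ⬝ᵥ vcurl nk x) * (v x ⬝ᵥ vcurl v x)
      + (nk x ⬝ᵥ vcurl v x) * (v x ⬝ᵥ vcurl nk x)
      + (v x ⬝ᵥ vcurl nk x) * (v x ⬝ᵥ vcurl nk x)) Ω := i1234.add it5
  have iKZ : IntegrableOn (fun x => K₃ * ((Zmat (1-ε₂) (nk x) *ᵥ vcurl v x) ⬝ᵥ vcurl v x)) Ω :=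
    iZ.const_mul K₃
  have iK5 : IntegrableOn (fun x => (K₂ - K₃) * ((v x ⬝ᵥ vcurl v x) * (nk x ⬝ᵥ vcurl nk x)
      + (nk x ⬝ᵥ vcurl v x) * (v x ⬝ᵥ vcurl nk x)
      + (nk x ⬝ᵥ vcurl nk x) * (v x ⬝ᵥ vcurl v x)
      + (nk x ⬝ᵥ vcurl v x) * (v x ⬝ᵥ vcurl nk x)
      + (v x ⬝ᵥ vcurl nk x) * (v x ⬝ᵥ vcurl nk x))) Ω := i12345.const_mul _
  have hsplit : K₃ * (∫ x in Ω, (Zmat (1-ε₂) (nk x) *ᵥ vcurl v x) ⬝ᵥ vcurl v x)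
      + (K₂ - K₃) *
        ((∫ x in Ω, (v x ⬝ᵥ vcurl v x) * (nk x ⬝ᵥ vcurl nk x))
          + (∫ x in Ω, (nk x ⬝ᵥ vcurl v x) * (v x ⬝ᵥ vcurl nk x))
          + (∫ x in Ω, (nk x ⬝ᵥ vcurl nk x) * (v x ⬝ᵥ vcurl v x))
          + (∫ x in Ω, (nk x ⬝ᵥ vcurl v x) * (v x ⬝ᵥ vcurl nk x))
          + (∫ x in Ω, (v x ⬝ᵥ vcurl nk x) * (v x ⬝ᵥ vcurl nk x)))
      = ∫ x in Ω, (K₃ * ((Zmat (1-ε₂) (nk x) *ᵥ vcurl v x) ⬝ᵥ vcurl v x)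
          + (K₂ - K₃) * ((v x ⬝ᵥ vcurl v x) * (nk x ⬝ᵥ vcurl nk x)
            + (nk x ⬝ᵥ vcurl v x) * (v x ⬝ᵥ vcurl nk x)
            + (nk x ⬝ᵥ vcurl nk x) * (v x ⬝ᵥ vcurl v x)
            + (nk x ⬝ᵥ vcurl v x) * (v x ⬝ᵥ vcurl nk x)
            + (v x ⬝ᵥ vcurl nk x) * (v x ⬝ᵥ vcurl nk x))) := by
    rw [← integral_add it1 it2, ← integral_add i12 it3,
      ← integral_add i123 it2, ← integral_add i1234 it5,
      ← integral_const_mul, ← integral_const_mul, ← integral_add iKZ iK5]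
  have iQ : IntegrableOn (fun x => K₃ * ((Zmat (1-ε₂) (nk x) *ᵥ vcurl v x) ⬝ᵥ vcurl v x)
          + (K₂ - K₃) * ((v x ⬝ᵥ vcurl v x) * (nk x ⬝ᵥ vcurl nk x)
            + (nk x ⬝ᵥ vcurl v x) * (v x ⬝ᵥ vcurl nk x)
            + (nk x ⬝ᵥ vcurl nk x) * (v x ⬝ᵥ vcurl v x)
            + (nk x ⬝ᵥ vcurl v x) * (v x ⬝ᵥ vcurl nk x)
            + (v x ⬝ᵥ vcurl nk x) * (v x ⬝ᵥ vcurl nk x))) Ω := iKZ.add iK5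
  have iXY : IntegrableOn (fun x => v x ⬝ᵥ v x + vcurl v x ⬝ᵥ vcurl v x) Ω := iX.add iY
  have iR1 : IntegrableOn (fun x => (1 - ε₂*β) * K₃ * (vcurl v x ⬝ᵥ vcurl v x)) Ω :=
    iY.const_mul _
  have iR2 : IntegrableOn (fun x => ε₂ * (K₃ * (4 * Real.sqrt (β * Csup) + Csup))
      * (v x ⬝ᵥ v x + vcurl v x ⬝ᵥ vcurl v x)) Ω := iXY.const_mul _
  have iR : IntegrableOn (fun x => (1 - ε₂*β) * K₃ * (vcurl v x ⬝ᵥ vcurl v x)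
      - ε₂ * (K₃ * (4 * Real.sqrt (β * Csup) + Csup)) * (v x ⬝ᵥ v x + vcurl v x ⬝ᵥ vcurl v x)) Ω :=
    iR1.sub iR2
  have hQR : (∫ x in Ω, ((1 - ε₂*β) * K₃ * (vcurl v x ⬝ᵥ vcurl v x)
        - ε₂ * (K₃ * (4 * Real.sqrt (β * Csup) + Csup)) * (v x ⬝ᵥ v x + vcurl v x ⬝ᵥ vcurl v x)))
      ≤ ∫ x in Ω, (K₃ * ((Zmat (1-ε₂) (nk x) *ᵥ vcurl v x) ⬝ᵥ vcurl v x)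
          + (K₂ - K₃) * ((v x ⬝ᵥ vcurl v x) * (nk x ⬝ᵥ vcurl nk x)
            + (nk x ⬝ᵥ vcurl v x) * (v x ⬝ᵥ vcurl nk x)
            + (nk x ⬝ᵥ vcurl nk x) * (v x ⬝ᵥ vcurl v x)
            + (nk x ⬝ᵥ vcurl v x) * (v x ⬝ᵥ vcurl nk x)
            + (v x ⬝ᵥ vcurl nk x) * (v x ⬝ᵥ vcurl nk x))) := by
    refine setIntegral_mono_on iR iQ hΩm ?_
    intro x hx
    rw [hco]
    have h := pointwise_bound' K₃ ε₂ β Csup hK₃ hε₂.le hCsup.le hβ0.le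
      (v x) (nk x) (vcurl nk x) (vcurl v x) (hnβ x hx) (hncurl x hx)
    calc (1 - ε₂*β) * K₃ * (vcurl v x ⬝ᵥ vcurl v x)
        - ε₂ * (K₃ * (4 * Real.sqrt (β * Csup) + Csup)) * (v x ⬝ᵥ v x + vcurl v x ⬝ᵥ vcurl v x)
        ≤ K₃ * ((Zmat (1-ε₂) (nk x) *ᵥ vcurl v x) ⬝ᵥ vcurl v x)
          + (-(ε₂*K₃)) * ((v x ⬝ᵥ vcurl v x)*(nk x ⬝ᵥ vcurl nk x)
            + (nk x ⬝ᵥ vcurl v x)*(v x ⬝ᵥ vcurl nk x)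
            + (nk x ⬝ᵥ vcurl nk x)*(v x ⬝ᵥ vcurl v x)
            + (nk x ⬝ᵥ vcurl v x)*(v x ⬝ᵥ vcurl nk x)
            + (v x ⬝ᵥ vcurl nk x)*(v x ⬝ᵥ vcurl nk x)) := h
      _ = _ := by ring
  have hReq : (∫ x in Ω, ((1 - ε₂*β) * K₃ * (vcurl v x ⬝ᵥ vcurl v x)
        - ε₂ * (K₃ * (4 * Real.sqrt (β * Csup) + Csup)) * (v x ⬝ᵥ v x + vcurl v x ⬝ᵥ vcurl v x)))
      = (1 - ε₂*β) * K₃ * (∫ x in Ω, vcurl v x ⬝ᵥ vcurl v x)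
        - ε₂ * (K₃ * (4 * Real.sqrt (β * Csup) + Csup))
          * ((∫ x in Ω, v x ⬝ᵥ v x) + (∫ x in Ω, vcurl v x ⬝ᵥ vcurl v x)) := by
    rw [integral_sub iR1 iR2, integral_const_mul, integral_const_mul, integral_add iX iY]
  -- put everything together
  have hAe : (fun x => vdiv v x * vdiv v x) = fun x => (vdiv v x)^2 :=
    funext fun x => (sq _).symm
  simp only [DCsq, aform, hκ]
  rw [hAe]
  have hmid := le_trans (le_of_eq hReq.symm) hQR
  have key : (1 - ε₂*β) * K₃ / (C+1) * ((∫ x in Ω, v x ⬝ᵥ v x) + (∫ x in Ω, (vdiv v x)^2)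
      + (∫ x in Ω, vcurl v x ⬝ᵥ vcurl v x))
      ≤ (1 - ε₂*β) * K₃ * ((∫ x in Ω, (vdiv v x)^2) + (∫ x in Ω, vcurl v x ⬝ᵥ vcurl v x)) := by
    rw [div_mul_eq_mul_div, div_le_iff₀ hC1]
    nlinarith [mul_le_mul_of_nonneg_left hPoin
      (by nlinarith : (0:ℝ) ≤ (1 - ε₂*β) * K₃)]
  nlinarith [hmid, hsplit, key, hL, mul_nonneg (sub_nonneg.mpr hK₁₃) hA0,
    mul_nonneg (mul_nonneg (mul_nonneg hε₂.le hβ0.le) hK₃.le) hA0,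
    mul_nonneg (mul_nonneg hε₂.le hα.le) hA0]
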